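/- Under the grid saddle move, which exchanges two X-markings in a 2x2 block from the top-left/bottom-right squares to the top-right/bottom-left squares (keeping all O-markings and grid lines fixed), the Alexander grading of every generator changes by at most 1/2, and the maximum shift 1/2 is realized; i.e., the identity map on generators has Alexander grading shift exactly 1/2. -/

import Mathlib

/-!
For a fixed point `p`, the saddle move changes `∑ⱼ J(p, Xⱼ)` only through the two moved
markings, so the change is the alternating sum of `J(p, ·)` over the four corners of the block.
Since `J(p, q) = ½([q < p] + [p < q])` coordinatewise, this alternating sum factors into
indicators of `p` lying in the block: it is `1` for the generator point at the block's centre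
`(a + 1, b + 1)` and `0` for every other generator point, while the double sum over pairs of
`X`-markings grows by exactly `1`, the two new markings forming a pair counted `½` in each
order. Hence `A₂(σ) - A₁(σ) = [σ(a + 1) = b + 1] - 1/2`.
-/

/-- The planar bilinear form `J`. -/
noncomputable def J (p q : ℝ × ℝ) : ℝ :=
  if (p.1 - q.1) * (p.2 - q.2) > 0 then 1/2 else 0

/-- The Alexander grading of the generator with points `(i, σ i)` in an index-`n` diagram
whose `X`- and `O`-markings sit at `(i + 1/2, xm i + 1/2)` and `(i + 1/2, om i + 1/2)`. -/
noncomputable def alex (n : ℕ) (xm om σ : Equiv.Perm (Fin n)) : ℝ :=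
  (∑ i : Fin n, ∑ j : Fin n, J (((i : ℕ) : ℝ), ((σ i : ℕ) : ℝ))
      (((j : ℕ) : ℝ) + 1/2, ((xm j : ℕ) : ℝ) + 1/2))
    - (∑ i : Fin n, ∑ j : Fin n, J (((i : ℕ) : ℝ), ((σ i : ℕ) : ℝ))
      (((j : ℕ) : ℝ) + 1/2, ((om j : ℕ) : ℝ) + 1/2))
    - (1/2) * (∑ i : Fin n, ∑ j : Fin n, J (((i : ℕ) : ℝ) + 1/2, ((xm i : ℕ) : ℝ) + 1/2)
      (((j : ℕ) : ℝ) + 1/2, ((xm j : ℕ) : ℝ) + 1/2))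
    + (1/2) * (∑ i : Fin n, ∑ j : Fin n, J (((i : ℕ) : ℝ) + 1/2, ((om i : ℕ) : ℝ) + 1/2)
      (((j : ℕ) : ℝ) + 1/2, ((om j : ℕ) : ℝ) + 1/2))
    - ((n : ℝ) - 1) / 2

open Finset

lemma J_comm (p q : ℝ × ℝ) : J p q = J q p := by
  simp only [J]
  rw [show (q.1 - p.1) * (q.2 - p.2) = (p.1 - q.1) * (p.2 - q.2) by ring]

lemma J_eq (p q : ℝ × ℝ) :
    J p q = 1/2 * ((if q.1 < p.1 then 1 else 0) * (if q.2 < p.2 then 1 else 0) +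
      (if p.1 < q.1 then 1 else 0) * (if p.2 < q.2 then 1 else 0)) := by
  simp only [J, gt_iff_lt, mul_pos_iff, sub_pos, sub_neg]
  grind

lemma ite_lt_sub_ite_add_one_lt (A s : ℝ) :
    (if A < s then (1 : ℝ) else 0) - (if A + 1 < s then 1 else 0) =
      if s ∈ Set.Ioc A (A + 1) then 1 else 0 := by
  grind

lemma ite_lt_add_one_sub_ite_lt (A s : ℝ) :
    (if s < A + 1 then (1 : ℝ) else 0) - (if s < A then 1 else 0) =
      if s ∈ Set.Ico A (A + 1) then 1 else 0 := by
  grind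

noncomputable def cornerSum (p : ℝ × ℝ) (A B : ℝ) : ℝ :=
  J p (A, B) + J p (A + 1, B + 1) - J p (A, B + 1) - J p (A + 1, B)

lemma cornerSum_eq (p : ℝ × ℝ) (A B : ℝ) :
    cornerSum p A B = 1/2 *
      ((if p.1 ∈ Set.Ioc A (A + 1) then 1 else 0) * (if p.2 ∈ Set.Ioc B (B + 1) then 1 else 0) +
        (if p.1 ∈ Set.Ico A (A + 1) then 1 else 0) * (if p.2 ∈ Set.Ico B (B + 1) then 1 else 0)) := by
  rw [← ite_lt_sub_ite_add_one_lt, ← ite_lt_sub_ite_add_one_lt, ← ite_lt_add_one_sub_ite_lt,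
    ← ite_lt_add_one_sub_ite_lt, cornerSum, J_eq, J_eq, J_eq, J_eq]
  ring

section HalfIntegerIntervals

variable (m A : ℕ)

lemma natCast_mem_Ioc_iff : (m : ℝ) ∈ Set.Ioc ((A : ℝ) + 1/2) (A + 1/2 + 1) ↔ m = A + 1 := by
  refine ⟨fun ⟨h₁, h₂⟩ => ?_, by rintro rfl; push_cast; constructor <;> linarith⟩
  have : (A : ℝ) < m ∧ (m : ℝ) < A + 2 := ⟨by linarith, by linarith⟩
  norm_cast at this
  omega

lemma natCast_mem_Ico_iff : (m : ℝ) ∈ Set.Ico ((A : ℝ) + 1/2) (A + 1/2 + 1) ↔ m = A + 1 := by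
  refine ⟨fun ⟨h₁, h₂⟩ => ?_, by rintro rfl; push_cast; constructor <;> linarith⟩
  have : (A : ℝ) < m ∧ (m : ℝ) < A + 2 := ⟨by linarith, by linarith⟩
  norm_cast at this
  omega

lemma natCast_add_half_mem_Ioc_iff :
    (m : ℝ) + 1/2 ∈ Set.Ioc ((A : ℝ) + 1/2) (A + 1/2 + 1) ↔ m = A + 1 := by
  refine ⟨fun ⟨h₁, h₂⟩ => ?_, by rintro rfl; push_cast; constructor <;> linarith⟩
  have : (A : ℝ) < m ∧ (m : ℝ) < A + 2 := ⟨by linarith, by linarith⟩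
  norm_cast at this
  omega

lemma natCast_add_half_mem_Ico_iff :
    (m : ℝ) + 1/2 ∈ Set.Ico ((A : ℝ) + 1/2) (A + 1/2 + 1) ↔ m = A := by
  refine ⟨fun ⟨h₁, h₂⟩ => ?_, by rintro rfl; constructor <;> linarith⟩
  have : (A : ℝ) < m + 1 ∧ (m : ℝ) < A + 1 := ⟨by linarith, by linarith⟩
  norm_cast at this
  omega

end HalfIntegerIntervals

structure IsGridSaddle {ι : Type*} (f g : ι → ℝ × ℝ) (a a' : ι) (A B : ℝ) : Prop where
  f_a : f a = (A, B)
  f_a' : f a' = (A + 1, B + 1)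
  g_a : g a = (A, B + 1)
  g_a' : g a' = (A + 1, B)
  eq_of_ne : ∀ i, i ≠ a → i ≠ a' → f i = g i

namespace IsGridSaddle

variable {ι : Type*} {f g : ι → ℝ × ℝ} {a a' : ι} {A B : ℝ}

lemma ne (h : IsGridSaddle f g a a' A B) : a ≠ a' := by
  rintro rfl
  have := h.f_a.symm.trans h.f_a'
  simp at this

variable [Fintype ι]

lemma sum_J_sub_sum_J (h : IsGridSaddle f g a a' A B) (p : ℝ × ℝ) :
    ∑ j, J p (f j) - ∑ j, J p (g j) = cornerSum p A B := by
  rw [← sum_sub_distrib, Fintype.sum_eq_add a a' h.ne fun j hj => by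
    rw [h.eq_of_ne j hj.1 hj.2, sub_self], h.f_a, h.f_a', h.g_a, h.g_a',
    cornerSum]
  ring

lemma sum_sum_J_sub_sum_sum_J (h : IsGridSaddle f g a a' A B) :
    ∑ i, ∑ j, J (f i) (f j) - ∑ i, ∑ j, J (g i) (g j) =
      ∑ i, cornerSum (f i) A B + ∑ i, cornerSum (g i) A B := by
  have hf : ∑ i, ∑ j, J (f i) (f j) - ∑ i, ∑ j, J (f i) (g j) = ∑ i, cornerSum (f i) A B := by
    rw [← sum_sub_distrib]
    exact sum_congr rfl fun i _ => h.sum_J_sub_sum_J (f i)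
  have hg : ∑ i, ∑ j, J (f i) (g j) - ∑ i, ∑ j, J (g i) (g j) = ∑ j, cornerSum (g j) A B := by
    rw [sum_comm, sum_comm (f := fun i j => J (g i) (g j)), ← sum_sub_distrib]
    refine sum_congr rfl fun j _ => ?_
    simp only [J_comm _ (g j)]
    exact h.sum_J_sub_sum_J (g j)
  linarith

end IsGridSaddle

section Grid

variable {n : ℕ}

noncomputable def generatorPoint (σ : Equiv.Perm (Fin n)) (i : Fin n) : ℝ × ℝ :=
  (((i : ℕ) : ℝ), ((σ i : ℕ) : ℝ))

noncomputable def markingPoint (xm : Equiv.Perm (Fin n)) (j : Fin n) : ℝ × ℝ :=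
  (((j : ℕ) : ℝ) + 1/2, ((xm j : ℕ) : ℝ) + 1/2)

lemma alex_sub_alex (xm xm' om σ : Equiv.Perm (Fin n)) :
    alex n xm' om σ - alex n xm om σ =
      (∑ i, ∑ j, J (generatorPoint σ i) (markingPoint xm' j) -
        ∑ i, ∑ j, J (generatorPoint σ i) (markingPoint xm j)) -
      1/2 * (∑ i, ∑ j, J (markingPoint xm' i) (markingPoint xm' j) -
        ∑ i, ∑ j, J (markingPoint xm i) (markingPoint xm j)) := by
  simp only [alex, generatorPoint, markingPoint]
  ring

lemma cornerSum_generatorPoint (σ : Equiv.Perm (Fin n)) (i a b : Fin n) :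
    cornerSum (generatorPoint σ i) ((a : ℕ) + 1/2) ((b : ℕ) + 1/2) =
      if (i : ℕ) = a + 1 ∧ (σ i : ℕ) = b + 1 then 1 else 0 := by
  simp only [cornerSum_eq, generatorPoint, natCast_mem_Ioc_iff, natCast_mem_Ico_iff,
    ite_zero_mul_ite_zero, mul_one]
  ring

lemma cornerSum_markingPoint (xm : Equiv.Perm (Fin n)) (j a b : Fin n) :
    cornerSum (markingPoint xm j) ((a : ℕ) + 1/2) ((b : ℕ) + 1/2) =
      1/2 * ((if (j : ℕ) = a + 1 ∧ (xm j : ℕ) = b + 1 then 1 else 0) +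
        if j = a ∧ xm j = b then 1 else 0) := by
  simp only [cornerSum_eq, markingPoint, natCast_add_half_mem_Ioc_iff,
    natCast_add_half_mem_Ico_iff, Fin.val_inj, ite_zero_mul_ite_zero, mul_one]

variable {a a' b b' : Fin n}

lemma sum_cornerSum_generatorPoint (ha : (a' : ℕ) = a + 1) (hb : (b' : ℕ) = b + 1)
    (σ : Equiv.Perm (Fin n)) :
    ∑ i, cornerSum (generatorPoint σ i) ((a : ℕ) + 1/2) ((b : ℕ) + 1/2) =
      if σ a' = b' then 1 else 0 := by
  simp only [cornerSum_generatorPoint, ← ha, ← hb, Fin.val_inj]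
  simp [ite_and]

lemma sum_cornerSum_markingPoint (ha : (a' : ℕ) = a + 1) (hb : (b' : ℕ) = b + 1)
    (xm : Equiv.Perm (Fin n)) :
    ∑ j, cornerSum (markingPoint xm j) ((a : ℕ) + 1/2) ((b : ℕ) + 1/2) =
      1/2 * ((if xm a' = b' then 1 else 0) + if xm a = b then 1 else 0) := by
  simp only [cornerSum_markingPoint, ← ha, ← hb, Fin.val_inj]
  simp [ite_and, sum_add_distrib, ← mul_sum]

lemma isGridSaddle_markingPoint {x1 x2 : Equiv.Perm (Fin n)}
    (ha : (a' : ℕ) = a + 1) (hb : (b' : ℕ) = b + 1)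
    (h1a : x1 a = b') (h1a' : x1 a' = b) (h2a : x2 a = b) (h2a' : x2 a' = b')
    (hagree : ∀ i, i ≠ a → i ≠ a' → x2 i = x1 i) :
    IsGridSaddle (markingPoint x2) (markingPoint x1) a a' ((a : ℕ) + 1/2) ((b : ℕ) + 1/2) where
  f_a := by simp [markingPoint, h2a]
  f_a' := by simp [markingPoint, h2a', ha, hb]; constructor <;> ring
  g_a := by simp [markingPoint, h1a, hb]; ring
  g_a' := by simp [markingPoint, h1a', ha]; ring
  eq_of_ne i hi hi' := by simp [markingPoint, hagree i hi hi']

lemma alex_sub_alex_of_saddle {om x1 x2 : Equiv.Perm (Fin n)}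
    (ha : (a' : ℕ) = a + 1) (hb : (b' : ℕ) = b + 1)
    (h1a : x1 a = b') (h1a' : x1 a' = b) (h2a : x2 a = b) (h2a' : x2 a' = b')
    (hagree : ∀ i, i ≠ a → i ≠ a' → x2 i = x1 i) (σ : Equiv.Perm (Fin n)) :
    alex n x2 om σ - alex n x1 om σ = (if σ a' = b' then 1 else 0) - 1/2 := by
  have hS := isGridSaddle_markingPoint ha hb h1a h1a' h2a h2a' hagree
  have hbb' : b ≠ b' := fun h => by rw [h] at hb; omega
  rw [alex_sub_alex, ← sum_sub_distrib, sum_congr rfl fun i _ => hS.sum_J_sub_sum_J _,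
    hS.sum_sum_J_sub_sum_sum_J, sum_cornerSum_generatorPoint ha hb,
    sum_cornerSum_markingPoint ha hb, sum_cornerSum_markingPoint ha hb,
    h1a, h1a', h2a, h2a', if_pos rfl, if_pos rfl, if_neg hbb', if_neg hbb'.symm]
  ring

end Grid

/-- The grid saddle move: `L₁` and `L₂` have the same `O`-markings `om`; in a `2×2` block
with columns `a, a'` (where `a' = a+1`) and rows `b, b'` (where `b' = b+1`), `L₁` has its
`X`-markings at the top-left and bottom-right squares while `L₂` has them at the bottom-left
and top-right squares, the `X`-markings agreeing elsewhere.  Then the Alexander grading of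
every generator changes by at most `1/2`, and the maximal shift `1/2` is realized. -/
theorem saddle_alexander_shift (n : ℕ) (om x1 x2 : Equiv.Perm (Fin n))
    (a a' b b' : Fin n) (ha : (a' : ℕ) = (a : ℕ) + 1) (hb : (b' : ℕ) = (b : ℕ) + 1)
    (h1a : x1 a = b') (h1a' : x1 a' = b)
    (h2a : x2 a = b) (h2a' : x2 a' = b')
    (hagree : ∀ i, i ≠ a → i ≠ a' → x2 i = x1 i) :
    (∀ σ : Equiv.Perm (Fin n), alex n x2 om σ - alex n x1 om σ ≤ 1/2) ∧
    (∃ σ : Equiv.Perm (Fin n), alex n x2 om σ - alex n x1 om σ = 1/2) := by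
  have key := alex_sub_alex_of_saddle (om := om) ha hb h1a h1a' h2a h2a' hagree
  refine ⟨fun σ => ?_, x2, ?_⟩
  · rw [key]
    split_ifs <;> norm_num
  · rw [key, if_pos h2a']
    norm_num
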